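/- arXiv:2110.14611 — 5 statements merged into one kernel-verified Lean document; each statement's English description precedes it below -/
import Mathlib

section
/- The out-of-order block Gibbs kernel K*((y,z,x),(dy',dz',dx')) = Π_{X|Z}(dx'|z') Π_{Z|XY}(dz'|x,y') Π_{Y|XZ}(dy'|x,z) has invariant probability measure Π*(dx,dy,dz) = Π_{X|Z}(dx|z) Π_{YZ}(dy,dz); that is, ∫ K*((y,z,x),·) Π*(dx,dy,dz) = Π*(·). -/
open MeasureTheory ProbabilityTheory

noncomputable def tvDist {E : Type*} [MeasurableSpace E] (μ ν : Measure E) : ℝ :=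
  ⨆ A : {A : Set E // MeasurableSet A}, |(μ A.1).toReal - (ν A.1).toReal|

noncomputable def kpow {E : Type*} [MeasurableSpace E] (P : Kernel E E) : ℕ → Kernel E E
  | 0 => Kernel.id
  | n + 1 => (kpow P n) ∘ₖ P

/-!
Redrawing `g` from its conditional law given `f` leaves the joint law of `(f, g)` unchanged.
`K*` only looks at `(x, z)`, which under `Π*` has law `Π_{XZ}` by this principle for `X` given
`Z`; so the sweep may be started from `(x, y, z) ~ Π`. Redrawing `y` given `(x, z)` and then `z`
given `(x, y')` keeps the law `Π`, hence `(y', z') ~ Π_{YZ}`, and the final draw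
`x' ~ Π_{X|Z}(·|z')` turns `Π_{YZ}` into `Π*`.
-/

namespace MeasureTheory.Measure

variable {α β γ Ω : Type*} [MeasurableSpace α] [MeasurableSpace β] [MeasurableSpace γ]
  [MeasurableSpace Ω]

lemma bind_map_of_measurable (μ : Measure α) {g : α → β} (hg : Measurable g)
    {f : β → Measure γ} (hf : Measurable f) :
    (μ.map g).bind f = μ.bind fun a => f (g a) := by
  rw [bind, bind, map_map hf hg]
  rfl

lemma _root_.ProbabilityTheory.Kernel.id_prod_apply (κ : Kernel α β) [IsSFiniteKernel κ]
    (a : α) : (Kernel.id ×ₖ κ) a = (κ a).map (Prod.mk a) := by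
  rw [Kernel.prod_apply, Kernel.id_apply, dirac_prod]

lemma measurable_bind_kernel (κ : Kernel α β) [IsSFiniteKernel κ] {f : α × β → Measure γ}
    (hf : Measurable f) : Measurable fun a => (κ a).bind fun b => f (a, b) := by
  have h : ∀ a, (κ a).bind (fun b => f (a, b)) = ((Kernel.id ×ₖ κ) a).bind f := fun a => by
    rw [Kernel.id_prod_apply, bind_map_of_measurable _ measurable_prodMk_left hf]
  simp_rw [h]
  exact (measurable_bind' hf).comp (Kernel.id ×ₖ κ).measurable

lemma measurable_map_kernel (κ : Kernel α β) [IsSFiniteKernel κ] {g : α × β → γ}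
    (hg : Measurable g) : Measurable fun a => (κ a).map fun b => g (a, b) := by
  have h : ∀ a, (κ a).map (fun b => g (a, b)) = (κ a).bind fun b => dirac (g (a, b)) :=
    fun a => (bind_dirac_eq_map _ (hg.comp measurable_prodMk_left)).symm
  simp_rw [h]
  exact measurable_bind_kernel κ (f := fun w => dirac (g w)) (measurable_dirac.comp hg)

lemma bind_compProd (μ : Measure α) [SFinite μ] (κ : Kernel α β) [IsSFiniteKernel κ]
    {f : α × β → Measure γ} (hf : Measurable f) :
    (μ ⊗ₘ κ).bind f = μ.bind fun a => (κ a).bind fun b => f (a, b) := by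
  rw [compProd_eq_comp_prod, Measure.bind_bind (Kernel.aemeasurable _) hf.aemeasurable]
  congr 1 with a : 1
  rw [Kernel.id_prod_apply, bind_map_of_measurable _ measurable_prodMk_left hf]

lemma bind_resample_eq (μ : Measure Ω) [SFinite μ] {f : Ω → α} {g : Ω → β}
    (hf : Measurable f) (hg : Measurable g) (κ : Kernel α β) [IsSFiniteKernel κ]
    (hκ : μ.map (fun ω => (f ω, g ω)) = μ.map f ⊗ₘ κ)
    {F : α × β → Measure γ} (hF : Measurable F) :
    (μ.bind fun ω => (κ (f ω)).bind fun b => F (f ω, b)) = μ.bind fun ω => F (f ω, g ω) := by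
  rw [← bind_map_of_measurable μ hf (measurable_bind_kernel κ hF), ← bind_compProd _ κ hF, ← hκ,
    bind_map_of_measurable μ (hf.prodMk hg) hF]

end MeasureTheory.Measure

open Measure

section OutOfOrderGibbs

variable {X Y Z : Type*} [MeasurableSpace X] [MeasurableSpace Y] [MeasurableSpace Z]
  (PXgZ : Kernel Z X) [IsSFiniteKernel PXgZ] (PYgXZ : Kernel (X × Z) Y)
  [IsSFiniteKernel PYgXZ] (PZgXY : Kernel (X × Y) Z) [IsSFiniteKernel PZgXY]

/-- The laws of the sampler's output `(y', z', x')` produced by the last one, two and three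
draws of the sweep. -/
noncomputable def drawX (r : Y × Z) : Measure (Y × Z × X) :=
  (PXgZ r.2).map fun x => (r.1, r.2, x)

noncomputable def drawZX (q : X × Y) : Measure (Y × Z × X) :=
  (PZgXY q).bind fun z' => drawX PXgZ (q.2, z')

noncomputable def drawYZX (q : X × Z) : Measure (Y × Z × X) :=
  (PYgXZ q).bind fun y' => drawZX PXgZ PZgXY (q.1, y')

lemma measurable_drawX : Measurable (drawX (Y := Y) PXgZ) :=
  measurable_map_kernel (PXgZ.comap Prod.snd measurable_snd)
    (g := fun w : (Y × Z) × X => (w.1.1, w.1.2, w.2)) (by fun_prop)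

lemma measurable_drawZX : Measurable (drawZX PXgZ PZgXY) :=
  measurable_bind_kernel PZgXY (f := fun w : (X × Y) × Z => drawX PXgZ (w.1.2, w.2))
    ((measurable_drawX PXgZ).comp (by fun_prop))

lemma measurable_drawYZX : Measurable (drawYZX PXgZ PYgXZ PZgXY) :=
  measurable_bind_kernel PYgXZ (f := fun w : (X × Z) × Y => drawZX PXgZ PZgXY (w.1.1, w.2))
    ((measurable_drawZX PXgZ PZgXY).comp (by fun_prop))

lemma bind_map_drawX_bind {Ω γ : Type*} [MeasurableSpace Ω] [MeasurableSpace γ]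
    (μ : Measure Ω) {φ : Ω → Y × Z} (hφ : Measurable φ) {F : X × Z → Measure γ}
    (hF : Measurable F) :
    (((μ.map φ).bind (drawX PXgZ)).bind fun p => F (p.2.2, p.2.1)) =
      μ.bind fun ω => (PXgZ (φ ω).2).bind fun x => F (x, (φ ω).2) := by
  have hF' : Measurable fun p : Y × Z × X => F (p.2.2, p.2.1) := hF.comp (by fun_prop)
  rw [bind_bind (measurable_drawX PXgZ).aemeasurable hF'.aemeasurable,
    bind_map_of_measurable μ hφ (f := fun r => (drawX PXgZ r).bind fun p => F (p.2.2, p.2.1))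
      ((measurable_bind' hF').comp (measurable_drawX PXgZ))]
  congr 1 with ω : 1
  exact bind_map_of_measurable _ (by fun_prop) hF'

end OutOfOrderGibbs

/-- The out-of-order block Gibbs kernel `K*` has invariant probability measure
`Π*(dx,dy,dz) = Π_{X|Z}(dx|z) Π_{YZ}(dy,dz)` (as a measure on Y × Z × X). -/
theorem outOfOrder_invariant
    {X Y Z : Type*} [MeasurableSpace X] [MeasurableSpace Y] [MeasurableSpace Z]
    (Pi : Measure (X × Y × Z)) [IsProbabilityMeasure Pi]
    (PXgZ : Kernel Z X) [IsMarkovKernel PXgZ]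
    (PYgXZ : Kernel (X × Z) Y) [IsMarkovKernel PYgXZ]
    (PZgXY : Kernel (X × Y) Z) [IsMarkovKernel PZgXY]
    (hXgZ : Pi.map (fun p : X × Y × Z => (p.2.2, p.1)) = (Pi.map fun p : X × Y × Z => p.2.2) ⊗ₘ PXgZ)
    (hYgXZ : Pi.map (fun p : X × Y × Z => ((p.1, p.2.2), p.2.1)) = (Pi.map fun p : X × Y × Z => (p.1, p.2.2)) ⊗ₘ PYgXZ)
    (hZgXY : Pi.map (fun p : X × Y × Z => ((p.1, p.2.1), p.2.2)) = (Pi.map fun p : X × Y × Z => (p.1, p.2.1)) ⊗ₘ PZgXY)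
    (Kstar : Kernel (Y × Z × X) (Y × Z × X))
    (hKstar : ∀ p : Y × Z × X, Kstar p =
      (PYgXZ (p.2.2, p.2.1)).bind fun y' =>
        (PZgXY (p.2.2, y')).bind fun z' =>
          (PXgZ z').map fun x' => (y', z', x'))
    (PiStar : Measure (Y × Z × X))
    (hPiStar : PiStar = (Pi.map fun p : X × Y × Z => (p.2.1, p.2.2)).bind fun q =>
        (PXgZ q.2).map fun x => (q.1, q.2, x))
    :
    PiStar.bind (fun p => Kstar p) = PiStar := by
  have hKstar' : (fun p => Kstar p) = fun p => drawYZX PXgZ PYgXZ PZgXY (p.2.2, p.2.1) :=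
    funext hKstar
  have hPiStar' : PiStar = (Pi.map fun p : X × Y × Z => (p.2.1, p.2.2)).bind (drawX PXgZ) :=
    hPiStar
  calc PiStar.bind (fun p => Kstar p)
      = Pi.bind fun p => (PXgZ p.2.2).bind fun x => drawYZX PXgZ PYgXZ PZgXY (x, p.2.2) := by
        rw [hKstar', hPiStar']
        exact bind_map_drawX_bind PXgZ Pi (by fun_prop) (measurable_drawYZX PXgZ PYgXZ PZgXY)
    _ = Pi.bind fun p => drawYZX PXgZ PYgXZ PZgXY (p.1, p.2.2) :=
        bind_resample_eq Pi (by fun_prop) measurable_fst PXgZ hXgZ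
          (F := fun w => drawYZX PXgZ PYgXZ PZgXY (w.2, w.1))
          ((measurable_drawYZX PXgZ PYgXZ PZgXY).comp (by fun_prop))
    _ = Pi.bind fun p => drawZX PXgZ PZgXY (p.1, p.2.1) :=
        bind_resample_eq Pi (by fun_prop) (by fun_prop) PYgXZ hYgXZ
          (F := fun w => drawZX PXgZ PZgXY (w.1.1, w.2))
          ((measurable_drawZX PXgZ PZgXY).comp (by fun_prop))
    _ = Pi.bind fun p => drawX PXgZ (p.2.1, p.2.2) :=
        bind_resample_eq Pi (by fun_prop) (by fun_prop) PZgXY hZgXY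
          (F := fun w => drawX PXgZ (w.1.2, w.2))
          ((measurable_drawX PXgZ).comp (by fun_prop))
    _ = PiStar := by rw [hPiStar', bind_map_of_measurable Pi (by fun_prop) (measurable_drawX PXgZ)]
end

section
/- The n-step Z-marginal kernel of the block Gibbs sampler satisfies K_Z^n(z, dz') = ∫ Π_{Z|XY}(dz'|x',y') Π_{Y|XZ}(dy'|x',z'') (ν_z K*^{(n−1)})(dy'', dz'', dx'), where ν_z is the distribution placing Z = z with probability one and X ~ Π_{X|Z}(·|z). -/
open MeasureTheory ProbabilityTheory

/-!
Let `Φ(y'', z'', x') = ∫ Π_{Z|XY}(· | x', y') Π_{Y|XZ}(dy' | x', z'')`. Since `Φ` ignores `y''`,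
`K_Z(z, ·) = ν_z Φ`. Moreover `K* Φ = Φ K_Z`: the last move of `K*` draws `x' ~ Π_{X|Z}(· | z')`,
and that draw followed by `Φ` is exactly one step of `K_Z` from `z'`. Iterating this
intertwining gives `K_Z^n(z, ·) = ν_z Φ K_Z^{n-1} = ν_z K*^{n-1} Φ`.
-/

section Giry

variable {α β γ δ : Type*} [MeasurableSpace α] [MeasurableSpace β] [MeasurableSpace γ]
  [MeasurableSpace δ]

theorem MeasureTheory.Measure.bind_map (μ : Measure α) {g : α → β} (hg : Measurable g)
    {f : β → Measure γ} (hf : Measurable f) :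
    (μ.map g).bind f = μ.bind fun a => f (g a) := by
  rw [Measure.bind, Measure.bind, Measure.map_map hf hg, Function.comp_def]

theorem Measurable.kernel_bind {κ : Kernel β γ} [IsSFiniteKernel κ] {e : α → β}
    (he : Measurable e) {f : α → γ → Measure δ} (hf : Measurable (Function.uncurry f)) :
    Measurable fun a => (κ (e a)).bind (f a) := by
  refine Measure.measurable_of_measurable_coe _ fun s hs => ?_
  have h a : (κ (e a)).bind (f a) s = ∫⁻ c, f a c s ∂κ (e a) :=
    Measure.bind_apply hs (hf.comp measurable_prodMk_left).aemeasurable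
  simp_rw [h]
  exact Measurable.lintegral_kernel_prod_right (κ := κ.comap e he) (f := fun a c => f a c s)
    ((Measure.measurable_coe hs).comp hf)

theorem Measurable.kernel_map {κ : Kernel β γ} [IsSFiniteKernel κ] {e : α → β}
    (he : Measurable e) {g : α → γ → δ} (hg : Measurable (Function.uncurry g)) :
    Measurable fun a => (κ (e a)).map (g a) := by
  have h a : (κ (e a)).map (g a) = (κ (e a)).bind fun c => Measure.dirac (g a c) :=
    (Measure.bind_dirac_eq_map _ (hg.comp measurable_prodMk_left)).symm
  simp_rw [h]
  exact he.kernel_bind (Measure.measurable_dirac.comp hg)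

end Giry

theorem comp_kpow_eq_kpow_comp {E F : Type*} [MeasurableSpace E] [MeasurableSpace F]
    {K : Kernel E E} {L : Kernel F F} {Φ : Kernel E F} (h : Φ ∘ₖ K = L ∘ₖ Φ) :
    ∀ n, Φ ∘ₖ kpow K n = kpow L n ∘ₖ Φ
  | 0 => by rw [kpow, kpow, Kernel.comp_id, Kernel.id_comp]
  | n + 1 => by
    rw [kpow, kpow, ← Kernel.comp_assoc, comp_kpow_eq_kpow_comp h n, Kernel.comp_assoc, h,
      ← Kernel.comp_assoc]

section BlockGibbs

variable {X Y Z : Type*} [MeasurableSpace X] [MeasurableSpace Y] [MeasurableSpace Z]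

/-- The factor `Π_{Z|XY}(dz' | x', y') Π_{Y|XZ}(dy' | x', z'')` of the representation, as a kernel
from the state `(y'', z'', x')` of `K*`. -/
noncomputable def yzUpdate (PYgXZ : Kernel (X × Z) Y) [IsSFiniteKernel PYgXZ]
    (PZgXY : Kernel (X × Y) Z) : Kernel (Y × Z × X) Z where
  toFun p := (PYgXZ (p.2.2, p.2.1)).bind fun y' => PZgXY (p.2.2, y')
  measurable' :=
    (by fun_prop : Measurable fun p : Y × Z × X => (p.2.2, p.2.1)).kernel_bind (by fun_prop)

variable {PXgZ : Kernel Z X} {PYgXZ : Kernel (X × Z) Y} {PZgXY : Kernel (X × Y) Z}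
  {PXYgZ : Kernel Z (X × Y)} {KZ : Kernel Z Z} {Kstar : Kernel (Y × Z × X) (Y × Z × X)}

theorem bind_yzUpdate_eq [IsSFiniteKernel PYgXZ]
    (hseq : ∀ z : Z, PXYgZ z = (PXgZ z).bind fun x => (PYgXZ (x, z)).map fun y => (x, y))
    (hKZ : ∀ z : Z, KZ z = (PXYgZ z).bind fun q => PZgXY q) (y : Y) (z : Z) :
    (PXgZ z).bind (fun x => yzUpdate PYgXZ PZgXY (y, z, x)) = KZ z := by
  have hmap : Measurable fun x : X => (PYgXZ (x, z)).map fun y => (x, y) :=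
    measurable_prodMk_right.kernel_map (by fun_prop)
  rw [hKZ, hseq, Measure.bind_bind hmap.aemeasurable PZgXY.aemeasurable]
  congr 1
  funext x
  exact (Measure.bind_map _ measurable_prodMk_left PZgXY.measurable).symm

theorem yzUpdate_comp_eq [IsSFiniteKernel PXgZ] [IsSFiniteKernel PYgXZ] [IsSFiniteKernel PZgXY]
    (hseq : ∀ z : Z, PXYgZ z = (PXgZ z).bind fun x => (PYgXZ (x, z)).map fun y => (x, y))
    (hKZ : ∀ z : Z, KZ z = (PXYgZ z).bind fun q => PZgXY q)
    (hKstar : ∀ p : Y × Z × X, Kstar p =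
      (PYgXZ (p.2.2, p.2.1)).bind fun y' =>
        (PZgXY (p.2.2, y')).bind fun z' =>
          (PXgZ z').map fun x' => (y', z', x')) :
    yzUpdate PYgXZ PZgXY ∘ₖ Kstar = KZ ∘ₖ yzUpdate PYgXZ PZgXY := by
  set Φ := yzUpdate PYgXZ PZgXY
  ext1 ⟨y, z, x⟩
  have hstep (y' : Y) (z' : Z) : ((PXgZ z').map fun x' => (y', z', x')).bind Φ = KZ z' := by
    rw [Measure.bind_map _ (by fun_prop) Φ.measurable, bind_yzUpdate_eq hseq hKZ]
  have hzx_meas (y' : Y) : Measurable fun z' : Z => (PXgZ z').map fun x' => (y', z', x') :=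
    measurable_id.kernel_map (by fun_prop)
  have hyzx_meas : Measurable fun y' : Y =>
      (PZgXY (x, y')).bind fun z' => (PXgZ z').map fun x' => (y', z', x') :=
    measurable_prodMk_left.kernel_bind (measurable_snd.kernel_map (by fun_prop))
  rw [Kernel.comp_apply, Kernel.comp_apply, hKstar,
    Measure.bind_bind hyzx_meas.aemeasurable Φ.aemeasurable]
  simp_rw [Measure.bind_bind (hzx_meas _).aemeasurable Φ.aemeasurable, hstep]
  exact (Measure.bind_bind (PZgXY.measurable.comp measurable_prodMk_left).aemeasurable
    KZ.aemeasurable).symm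

end BlockGibbs

theorem KZ_pow_eq_general
    {X Y Z : Type*} [MeasurableSpace X] [MeasurableSpace Y] [MeasurableSpace Z]
    (PXgZ : Kernel Z X) [IsMarkovKernel PXgZ]
    (PYgXZ : Kernel (X × Z) Y) [IsMarkovKernel PYgXZ]
    (PZgXY : Kernel (X × Y) Z) [IsMarkovKernel PZgXY]
    (PXYgZ : Kernel Z (X × Y))
    (hseq : ∀ z : Z, PXYgZ z = (PXgZ z).bind fun x => (PYgXZ (x, z)).map fun y => (x, y))
    (KZ : Kernel Z Z)
    (hKZ : ∀ z : Z, KZ z = (PXYgZ z).bind fun q => PZgXY q)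
    (Kstar : Kernel (Y × Z × X) (Y × Z × X))
    (hKstar : ∀ p : Y × Z × X, Kstar p =
      (PYgXZ (p.2.2, p.2.1)).bind fun y' =>
        (PZgXY (p.2.2, y')).bind fun z' =>
          (PXgZ z').map fun x' => (y', z', x'))
    :
    ∀ (z : Z) (y₀ : Y) (n : ℕ), 1 ≤ n →
      (kpow KZ n) z =
        ((((PXgZ z).map fun x => (y₀, z, x)).bind fun u => (kpow Kstar (n - 1)) u).bind
          fun p => (PYgXZ (p.2.2, p.2.1)).bind fun y' => PZgXY (p.2.2, y')) := by
  intro z y₀ n hn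
  obtain ⟨m, rfl⟩ := Nat.exists_eq_add_of_le' hn
  set Φ := yzUpdate PYgXZ PZgXY
  set ν := (PXgZ z).map fun x => (y₀, z, x)
  have hν : Φ ∘ₘ ν = KZ z := by
    rw [Measure.bind_map _ (by fun_prop) Φ.measurable, bind_yzUpdate_eq hseq hKZ]
  calc kpow KZ (m + 1) z = kpow KZ m ∘ₘ (Φ ∘ₘ ν) := by rw [hν]; rfl
    _ = Φ ∘ₘ (kpow Kstar m ∘ₘ ν) := by
      rw [Measure.comp_assoc, ← comp_kpow_eq_kpow_comp (yzUpdate_comp_eq hseq hKZ hKstar),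
        Measure.comp_assoc]

/-- Representation of the n-step Z-marginal block Gibbs kernel in terms of the
out-of-order kernel started from ν_z. -/
theorem KZ_pow_eq
    {X Y Z : Type*} [MeasurableSpace X] [MeasurableSpace Y] [MeasurableSpace Z]
    (Pi : Measure (X × Y × Z)) [IsProbabilityMeasure Pi]
    (PXgZ : Kernel Z X) [IsMarkovKernel PXgZ]
    (PYgXZ : Kernel (X × Z) Y) [IsMarkovKernel PYgXZ]
    (PZgXY : Kernel (X × Y) Z) [IsMarkovKernel PZgXY]
    (PXYgZ : Kernel Z (X × Y)) [IsMarkovKernel PXYgZ]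
    (hseq : ∀ z : Z, PXYgZ z = (PXgZ z).bind fun x => (PYgXZ (x, z)).map fun y => (x, y))
    (KZ : Kernel Z Z)
    (hKZ : ∀ z : Z, KZ z = (PXYgZ z).bind fun q => PZgXY q)
    (Kstar : Kernel (Y × Z × X) (Y × Z × X))
    (hKstar : ∀ p : Y × Z × X, Kstar p =
      (PYgXZ (p.2.2, p.2.1)).bind fun y' =>
        (PZgXY (p.2.2, y')).bind fun z' =>
          (PXgZ z').map fun x' => (y', z', x'))
    :
    ∀ (z : Z) (y₀ : Y) (n : ℕ), 1 ≤ n →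
      (kpow KZ n) z =
        ((((PXgZ z).map fun x => (y₀, z, x)).bind fun u => (kpow Kstar (n - 1)) u).bind
          fun p => (PYgXZ (p.2.2, p.2.1)).bind fun y' => PZgXY (p.2.2, y')) :=
  KZ_pow_eq_general PXgZ PYgXZ PZgXY PXYgZ hseq KZ hKZ Kstar hKstar
end

section
/- The n-step out-of-order block Gibbs kernel satisfies K*^n((y,z,x),(dy',dz',dx')) = ∫ Π_{X|Z}(dx'|z') Π_{Z|XY}(dz'|x'',y') (ν_{(x,z)} K_{XY}^{n−1})(dx'',dy'), where ν_{(x,z)} is the distribution placing X = x with probability one and Y ~ Π_{Y|XZ}(·|x,z). -/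
open MeasureTheory ProbabilityTheory

/-!
The step `N = yUpdate` redraws `y ~ Π_{Y|XZ}(·|x,z)` keeping `x` (from `(y,z,x)` it is
`ν_{(x,z)}`), and `F = zxUpdate` draws `z' ~ Π_{Z|XY}`, then `x' ~ Π_{X|Z}(·|z')`, keeping `y`.
Then `K* = F ∘ N` while `K_{XY} = N ∘ F`, so by associativity
`K*^n = F ∘ (N ∘ F)^{n-1} ∘ N = F ∘ K_{XY}^{n-1} ∘ N`.
-/

namespace MeasureTheory.Measure

variable {α β γ : Type*} [MeasurableSpace α] [MeasurableSpace β] [MeasurableSpace γ]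

theorem bind_map_s6 (μ : Measure α) {f : α → β} {g : β → Measure γ}
    (hf : Measurable f) (hg : Measurable g) :
    (μ.map f).bind g = μ.bind fun a => g (f a) := by
  have hd : Measurable fun a => dirac (f a) := measurable_dirac.comp hf
  rw [← bind_dirac_eq_map μ hf, bind_bind hd.aemeasurable hg.aemeasurable]
  simp_rw [dirac_bind hg]

theorem map_bind (μ : Measure α) {f : α → Measure β} {g : β → γ}
    (hf : Measurable f) (hg : Measurable g) :
    (μ.bind f).map g = μ.bind fun a => (f a).map g := by
  have hd : Measurable fun b => dirac (g b) := measurable_dirac.comp hg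
  rw [← bind_dirac_eq_map _ hg, bind_bind hf.aemeasurable hd.aemeasurable]
  simp_rw [bind_dirac_eq_map _ hg]

end MeasureTheory.Measure

namespace ProbabilityTheory.Kernel

theorem deterministic_prod_apply {α β γ : Type*} [MeasurableSpace α] [MeasurableSpace β]
    [MeasurableSpace γ] {f : α → β} (hf : Measurable f) (κ : Kernel α γ) [IsSFiniteKernel κ]
    (a : α) : (deterministic f hf ×ₖ κ) a = (κ a).map (Prod.mk (f a)) := by
  rw [prod_apply, deterministic_apply, Measure.dirac_prod]

theorem id_prod_apply_s6 {α β : Type*} [MeasurableSpace α] [MeasurableSpace β]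
    (κ : Kernel α β) [IsSFiniteKernel κ] (a : α) :
    (Kernel.id ×ₖ κ) a = (κ a).map (Prod.mk a) :=
  deterministic_prod_apply _ κ a

end ProbabilityTheory.Kernel

theorem kpow_comp_succ {A B : Type*} [MeasurableSpace A] [MeasurableSpace B]
    (F : Kernel B A) (G : Kernel A B) (m : ℕ) :
    kpow (F ∘ₖ G) (m + 1) = F ∘ₖ (kpow (G ∘ₖ F) m ∘ₖ G) := by
  induction m with
  | zero => simp only [kpow, Kernel.id_comp]
  | succ m ih => rw [kpow, ih]; simp only [kpow, Kernel.comp_assoc]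

section BlockGibbs

variable {X Y Z : Type*} [MeasurableSpace X] [MeasurableSpace Y] [MeasurableSpace Z]

noncomputable def yUpdate (PYgXZ : Kernel (X × Z) Y) : Kernel (Y × Z × X) (X × Y) :=
  Kernel.deterministic (fun p : Y × Z × X => p.2.2) (by fun_prop) ×ₖ
    PYgXZ.comap (fun p : Y × Z × X => (p.2.2, p.2.1)) (by fun_prop)

noncomputable def zxUpdate (PXgZ : Kernel Z X) (PZgXY : Kernel (X × Y) Z) :
    Kernel (X × Y) (Y × Z × X) :=
  Kernel.deterministic (Prod.snd : X × Y → Y) measurable_snd ×ₖ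
    ((Kernel.id ×ₖ PXgZ) ∘ₖ PZgXY)

theorem yUpdate_apply (PYgXZ : Kernel (X × Z) Y) [IsSFiniteKernel PYgXZ] (p : Y × Z × X) :
    yUpdate PYgXZ p = (PYgXZ (p.2.2, p.2.1)).map fun y => (p.2.2, y) := by
  rw [yUpdate, Kernel.deterministic_prod_apply, Kernel.comap_apply]

theorem zxUpdate_apply (PXgZ : Kernel Z X) [IsSFiniteKernel PXgZ]
    (PZgXY : Kernel (X × Y) Z) [IsSFiniteKernel PZgXY] (q : X × Y) :
    zxUpdate PXgZ PZgXY q = (PZgXY q).bind fun z => (PXgZ z).map fun x => (q.2, z, x) := by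
  rw [zxUpdate, Kernel.deterministic_prod_apply, Kernel.comp_apply,
    Measure.map_bind _ (Kernel.measurable _) measurable_prodMk_left]
  congr! 2 with z
  rw [Kernel.id_prod_apply_s6, Measure.map_map measurable_prodMk_left measurable_prodMk_left]
  rfl

theorem zxUpdate_comp_yUpdate_apply (PXgZ : Kernel Z X) [IsSFiniteKernel PXgZ]
    (PYgXZ : Kernel (X × Z) Y) [IsSFiniteKernel PYgXZ]
    (PZgXY : Kernel (X × Y) Z) [IsSFiniteKernel PZgXY] (p : Y × Z × X) :
    (zxUpdate PXgZ PZgXY ∘ₖ yUpdate PYgXZ) p =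
      (PYgXZ (p.2.2, p.2.1)).bind fun y =>
        (PZgXY (p.2.2, y)).bind fun z => (PXgZ z).map fun x => (y, z, x) := by
  simp_rw [Kernel.comp_apply, yUpdate_apply,
    Measure.bind_map_s6 _ measurable_prodMk_left (Kernel.measurable _), zxUpdate_apply]

theorem yUpdate_comp_zxUpdate_apply (PXgZ : Kernel Z X) [IsSFiniteKernel PXgZ]
    (PYgXZ : Kernel (X × Z) Y) [IsSFiniteKernel PYgXZ]
    (PZgXY : Kernel (X × Y) Z) [IsSFiniteKernel PZgXY] (q : X × Y) :
    (yUpdate PYgXZ ∘ₖ zxUpdate PXgZ PZgXY) q =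
      (PZgXY q).bind fun z => (PXgZ z).bind fun x => (PYgXZ (x, z)).map fun y => (x, y) := by
  have hy : Measurable fun w => yUpdate PYgXZ (q.2, w) :=
    (Kernel.measurable _).comp measurable_prodMk_left
  rw [Kernel.comp_apply, zxUpdate, Kernel.deterministic_prod_apply, Kernel.comp_apply,
    Measure.bind_map_s6 _ measurable_prodMk_left (Kernel.measurable _),
    Measure.bind_bind (Kernel.measurable _).aemeasurable hy.aemeasurable]
  congr! 2 with z
  rw [Kernel.id_prod_apply_s6, Measure.bind_map_s6 _ measurable_prodMk_left hy]
  simp_rw [yUpdate_apply]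

end BlockGibbs

theorem Kstar_pow_eq_general
    {X Y Z : Type*} [MeasurableSpace X] [MeasurableSpace Y] [MeasurableSpace Z]
    (PXgZ : Kernel Z X) [IsMarkovKernel PXgZ]
    (PYgXZ : Kernel (X × Z) Y) [IsMarkovKernel PYgXZ]
    (PZgXY : Kernel (X × Y) Z) [IsMarkovKernel PZgXY]
    (PXYgZ : Kernel Z (X × Y))
    (hseq : ∀ z : Z, PXYgZ z = (PXgZ z).bind fun x => (PYgXZ (x, z)).map fun y => (x, y))
    (KXY : Kernel (X × Y) (X × Y))
    (hKXY : ∀ q : X × Y, KXY q = (PZgXY q).bind fun z => PXYgZ z)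
    (Kstar : Kernel (Y × Z × X) (Y × Z × X))
    (hKstar : ∀ p : Y × Z × X, Kstar p =
      (PYgXZ (p.2.2, p.2.1)).bind fun y' =>
        (PZgXY (p.2.2, y')).bind fun z' =>
          (PXgZ z').map fun x' => (y', z', x'))
    :
    ∀ (p : Y × Z × X) (n : ℕ), 1 ≤ n →
      (kpow Kstar n) p =
        ((((PYgXZ (p.2.2, p.2.1)).map fun y => (p.2.2, y)).bind fun q =>
            (kpow KXY (n - 1)) q).bind
          fun q => (PZgXY q).bind fun z' => (PXgZ z').map fun x' => (q.2, z', x')) := by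
  have hKstar_eq : Kstar = zxUpdate PXgZ PZgXY ∘ₖ yUpdate PYgXZ := by
    ext1 p
    rw [hKstar, zxUpdate_comp_yUpdate_apply]
  have hKXY_eq : KXY = yUpdate PYgXZ ∘ₖ zxUpdate PXgZ PZgXY := by
    ext1 q
    simp_rw [hKXY, hseq, yUpdate_comp_zxUpdate_apply]
  rintro p n hn
  obtain ⟨m, rfl⟩ := Nat.exists_eq_add_of_le' hn
  rw [hKstar_eq, kpow_comp_succ, ← hKXY_eq, Kernel.comp_apply, Kernel.comp_apply,
    Nat.add_sub_cancel, ← yUpdate_apply]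
  simp_rw [← zxUpdate_apply]

/-- Representation of the n-step out-of-order kernel in terms of the (X,Y)-marginal
block Gibbs kernel started from ν_{(x,z)}. -/
theorem Kstar_pow_eq
    {X Y Z : Type*} [MeasurableSpace X] [MeasurableSpace Y] [MeasurableSpace Z]
    (Pi : Measure (X × Y × Z)) [IsProbabilityMeasure Pi]
    (PXgZ : Kernel Z X) [IsMarkovKernel PXgZ]
    (PYgXZ : Kernel (X × Z) Y) [IsMarkovKernel PYgXZ]
    (PZgXY : Kernel (X × Y) Z) [IsMarkovKernel PZgXY]
    (PXYgZ : Kernel Z (X × Y)) [IsMarkovKernel PXYgZ]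
    (hseq : ∀ z : Z, PXYgZ z = (PXgZ z).bind fun x => (PYgXZ (x, z)).map fun y => (x, y))
    (KXY : Kernel (X × Y) (X × Y))
    (hKXY : ∀ q : X × Y, KXY q = (PZgXY q).bind fun z => PXYgZ z)
    (Kstar : Kernel (Y × Z × X) (Y × Z × X))
    (hKstar : ∀ p : Y × Z × X, Kstar p =
      (PYgXZ (p.2.2, p.2.1)).bind fun y' =>
        (PZgXY (p.2.2, y')).bind fun z' =>
          (PXgZ z').map fun x' => (y', z', x'))
    :
    ∀ (p : Y × Z × X) (n : ℕ), 1 ≤ n →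
      (kpow Kstar n) p =
        ((((PYgXZ (p.2.2, p.2.1)).map fun y => (p.2.2, y)).bind fun q =>
            (kpow KXY (n - 1)) q).bind
          fun q => (PZgXY q).bind fun z' => (PXgZ z').map fun x' => (q.2, z', x')) :=
  Kstar_pow_eq_general PXgZ PYgXZ PZgXY PXYgZ hseq KXY hKXY Kstar hKstar
end

section
/- The invariant distribution Π* of the out-of-order block Gibbs chain admits the representation Π*(dy',dz',dx') = ∫_X Π_{X|Z}(dx'|z') Π_{Z|XY}(dz'|x'',y') Π_{XY}(dx'',dy'). -/
open MeasureTheory ProbabilityTheory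

/-! Since `Π_{Z|XY}` disintegrates `Π` over `(x, y)`, the marginal `Π_{YZ}` is the image of
`Π_{XY} ⊗ Π_{Z|XY}` under `(x, y, z) ↦ (y, z)`. Substituting this into the defining formula
`Π* = ∫ Π_{X|Z}(dx'|z') Π_{YZ}(dy', dz')` and integrating out the product in two stages
gives the representation. -/

namespace ProbabilityTheory.Kernel

variable {α β γ : Type*} [MeasurableSpace α] [MeasurableSpace β] [MeasurableSpace γ]
  (κ : Kernel α β) [IsSFiniteKernel κ]

theorem measurable_map_section {g : α × β → γ} (hg : Measurable g) :
    Measurable fun a => (κ a).map fun b => g (a, b) := by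
  refine Measure.measurable_of_measurable_coe _ fun s hs => ?_
  have h_apply (a : α) : (κ a).map (fun b => g (a, b)) s = κ a (Prod.mk a ⁻¹' (g ⁻¹' s)) :=
    Measure.map_apply (hg.comp measurable_prodMk_left) hs
  simp_rw [h_apply]
  exact measurable_kernel_prodMk_left (hg hs)

theorem measurable_bind_section {F : α × β → Measure γ} (hF : Measurable F) :
    Measurable fun a => (κ a).bind fun b => F (a, b) := by
  refine Measure.measurable_of_measurable_coe _ fun s hs => ?_
  have h_apply (a : α) : (κ a).bind (fun b => F (a, b)) s = ∫⁻ b, F (a, b) s ∂κ a :=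
    Measure.bind_apply hs (hF.comp measurable_prodMk_left).aemeasurable
  simp_rw [h_apply]
  have hFs : Measurable fun p => F p s := (Measure.measurable_coe hs).comp hF
  exact hFs.lintegral_kernel_prod_right

end ProbabilityTheory.Kernel

namespace MeasureTheory.Measure

variable {α β γ : Type*} [MeasurableSpace α] [MeasurableSpace β] [MeasurableSpace γ]

theorem bind_map_s12 {m : Measure α} {g : α → β} (hg : Measurable g) {η : β → Measure γ}
    (hη : Measurable η) : (m.map g).bind η = m.bind (η ∘ g) := by
  ext s hs
  have hηs : Measurable fun b => η b s := (measurable_coe hs).comp hη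
  rw [bind_apply hs hη.aemeasurable, bind_apply hs (hη.comp hg).aemeasurable,
    lintegral_map hηs hg]
  rfl

theorem compProd_bind (μ : Measure α) [SFinite μ] (κ : Kernel α β)
    [IsSFiniteKernel κ] {F : α × β → Measure γ} (hF : Measurable F) :
    (μ ⊗ₘ κ).bind F = μ.bind fun a => (κ a).bind fun b => F (a, b) := by
  ext s hs
  have hFs : Measurable fun p => F p s := (measurable_coe hs).comp hF
  rw [bind_apply hs hF.aemeasurable, bind_apply hs (κ.measurable_bind_section hF).aemeasurable,
    lintegral_compProd hFs]
  exact lintegral_congr fun a => (bind_apply hs (hF.comp measurable_prodMk_left).aemeasurable).symm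

end MeasureTheory.Measure

theorem PiStar_rep_general
    {X Y Z : Type*} [MeasurableSpace X] [MeasurableSpace Y] [MeasurableSpace Z]
    (Pi : Measure (X × Y × Z)) [IsProbabilityMeasure Pi]
    (PXgZ : Kernel Z X) [IsMarkovKernel PXgZ]
    (PZgXY : Kernel (X × Y) Z) [IsMarkovKernel PZgXY]
    (hZgXY : Pi.map (fun p : X × Y × Z => ((p.1, p.2.1), p.2.2)) = (Pi.map fun p : X × Y × Z => (p.1, p.2.1)) ⊗ₘ PZgXY)
    (PiStar : Measure (Y × Z × X))
    (hPiStar : PiStar = (Pi.map fun p : X × Y × Z => (p.2.1, p.2.2)).bind fun q =>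
        (PXgZ q.2).map fun x => (q.1, q.2, x))
    :
    PiStar = (Pi.map fun p : X × Y × Z => (p.1, p.2.1)).bind fun q =>
      (PZgXY q).bind fun z' => (PXgZ z').map fun x' => (q.2, z', x') := by
  have h_proj : Measurable fun p : (X × Y) × Z => (p.1.2, p.2) := by fun_prop
  have h_marginalYZ : (Pi.map fun p : X × Y × Z => (p.2.1, p.2.2)) =
      ((Pi.map fun p : X × Y × Z => (p.1, p.2.1)) ⊗ₘ PZgXY).map fun p => (p.1.2, p.2) := by
    rw [← hZgXY, Measure.map_map h_proj (by fun_prop)]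
    rfl
  have h_update : Measurable fun q : Y × Z => (PXgZ q.2).map fun x => (q.1, q.2, x) :=
    (PXgZ.comap Prod.snd measurable_snd).measurable_map_section
      (g := fun p : (Y × Z) × X => (p.1.1, p.1.2, p.2)) (by fun_prop)
  rw [hPiStar, h_marginalYZ, Measure.bind_map_s12 h_proj h_update,
    Measure.compProd_bind _ _ (h_update.comp h_proj)]
  rfl

/-- Π*(dy',dz',dx') = ∫_X Π_{X|Z}(dx'|z') Π_{Z|XY}(dz'|x'',y') Π_{XY}(dx'',dy'). -/
theorem PiStar_rep
    {X Y Z : Type*} [MeasurableSpace X] [MeasurableSpace Y] [MeasurableSpace Z]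
    (Pi : Measure (X × Y × Z)) [IsProbabilityMeasure Pi]
    (PXgZ : Kernel Z X) [IsMarkovKernel PXgZ]
    (PYgXZ : Kernel (X × Z) Y) [IsMarkovKernel PYgXZ]
    (PZgXY : Kernel (X × Y) Z) [IsMarkovKernel PZgXY]
    (hXgZ : Pi.map (fun p : X × Y × Z => (p.2.2, p.1)) = (Pi.map fun p : X × Y × Z => p.2.2) ⊗ₘ PXgZ)
    (hYgXZ : Pi.map (fun p : X × Y × Z => ((p.1, p.2.2), p.2.1)) = (Pi.map fun p : X × Y × Z => (p.1, p.2.2)) ⊗ₘ PYgXZ)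
    (hZgXY : Pi.map (fun p : X × Y × Z => ((p.1, p.2.1), p.2.2)) = (Pi.map fun p : X × Y × Z => (p.1, p.2.1)) ⊗ₘ PZgXY)
    (PiStar : Measure (Y × Z × X))
    (hPiStar : PiStar = (Pi.map fun p : X × Y × Z => (p.2.1, p.2.2)).bind fun q =>
        (PXgZ q.2).map fun x => (q.1, q.2, x))
    :
    PiStar = (Pi.map fun p : X × Y × Z => (p.1, p.2.1)).bind fun q =>
      (PZgXY q).bind fun z' => (PXgZ z').map fun x' => (q.2, z', x') :=
  PiStar_rep_general Pi PXgZ PZgXY hZgXY PiStar hPiStar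
end

section
/- The Z-marginal invariant distribution admits the representation Π_Z(dz') = ∫ Π_{Z|XY}(dz'|x',y') Π_{Y|XZ}(dy'|x',z'') Π*(dx',dy'',dz''), where Π*(dx,dy,dz) = Π_{X|Z}(dx|z) Π_{YZ}(dy,dz). -/
/-!
Every conditional in the statement is a disintegration of `Pi`: if the law of `(g, h)` is
`law g ⊗ₘ κ`, then integrating `κ` against `law g` and pushing forward along any `f` gives the law
of `f (g, h)`. The integrand of the right-hand side depends on `(x', z'')` only, and the
`(X, Z)`-marginal of `Π*` is `Π_Z ⊗ₘ Π_{X|Z} = Π_{XZ}`. Integrating `Π_{Y|XZ}` against `Π_{XZ}`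
gives `Π_{XY}`, and integrating `Π_{Z|XY}` against `Π_{XY}` gives `Π_Z`.
-/

open MeasureTheory ProbabilityTheory

namespace ProbabilityTheory

variable {Ω α β γ δ : Type*} [MeasurableSpace Ω] [MeasurableSpace α] [MeasurableSpace β]
  [MeasurableSpace γ] [MeasurableSpace δ]

lemma Kernel.map_id_prod_apply (κ : Kernel α β) [IsSFiniteKernel κ] {f : α × β → γ}
    (hf : Measurable f) (a : α) :
    (Kernel.id ×ₖ κ).map f a = (κ a).map fun b => f (a, b) := by
  rw [Kernel.map_apply _ hf, Kernel.prod_apply, Kernel.id_apply, Measure.dirac_prod,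
    Measure.map_map hf measurable_prodMk_left]
  rfl

lemma Measure.comp_map_eq_comp_comap (κ : Kernel β γ) (μ : Measure α) {f : α → β}
    (hf : Measurable f) : κ ∘ₘ μ.map f = κ.comap f hf ∘ₘ μ := by
  rw [← Measure.deterministic_comp_eq_map hf, Measure.comp_assoc,
    Kernel.comp_deterministic_eq_comap]

lemma Measure.comp_map_of_map_prodMk_eq_compProd (ν : Measure Ω) [SFinite ν] {g : Ω → α}
    {h : Ω → β} (hg : Measurable g) (hh : Measurable h) (κ : Kernel α β) [IsSFiniteKernel κ]
    (hκ : ν.map (fun ω => (g ω, h ω)) = ν.map g ⊗ₘ κ) {f : α × β → γ} (hf : Measurable f) :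
    (Kernel.id ×ₖ κ).map f ∘ₘ ν.map g = ν.map fun ω => f (g ω, h ω) := by
  rw [← Measure.map_comp _ _ hf, ← Measure.compProd_eq_comp_prod, ← hκ,
    Measure.map_map hf (hg.prodMk hh)]
  rfl

lemma Measure.map_bind_map_prodMk_snd (μ : Measure (β × γ)) (κ : Kernel γ α) [IsSFiniteKernel κ] :
    (μ.bind fun q => (κ q.2).map fun a => (q.1, q.2, a)).map (fun p => (p.2.2, p.2.1))
      = (Kernel.id ×ₖ κ).map Prod.swap ∘ₘ μ.map Prod.snd := by
  let K : Kernel (β × γ) (β × γ × α) :=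
    (Kernel.id ×ₖ κ.comap Prod.snd measurable_snd).map fun w => (w.1.1, w.1.2, w.2)
  have hK : (μ.bind fun q => (κ q.2).map fun a => (q.1, q.2, a)) = K ∘ₘ μ := by
    congr with q : 1
    rw [Kernel.map_id_prod_apply _ (by fun_prop), Kernel.comap_apply]
  have hK_marg : K.map (fun p => (p.2.2, p.2.1))
      = ((Kernel.id ×ₖ κ).map Prod.swap).comap Prod.snd measurable_snd := by
    ext q : 1
    rw [Kernel.map_apply _ (by fun_prop), Kernel.map_id_prod_apply _ (by fun_prop),
      Measure.map_map (by fun_prop) (by fun_prop), Kernel.comap_apply, Kernel.comap_apply,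
      Kernel.map_id_prod_apply _ measurable_swap]
    rfl
  rw [hK, Measure.map_comp _ _ (by fun_prop), hK_marg, Measure.comp_map_eq_comp_comap]

lemma Kernel.comp_map_id_prod_apply (κ : Kernel α β) [IsSFiniteKernel κ] (η : Kernel (γ × β) δ)
    {f : α → γ} (hf : Measurable f) (a : α) :
    (η ∘ₖ (Kernel.id ×ₖ κ).map fun w => (f w.1, w.2)) a = (κ a).bind fun b => η (f a, b) := by
  rw [Kernel.comp_apply, Kernel.map_id_prod_apply _ (by fun_prop),
    Measure.comp_map_eq_comp_comap _ _ (by fun_prop)]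
  rfl

end ProbabilityTheory

/-- Π_Z(dz') = ∫ Π_{Z|XY}(dz'|x',y') Π_{Y|XZ}(dy'|x',z'') Π*(dx',dy'',dz''). -/
theorem PiZ_rep
    {X Y Z : Type*} [MeasurableSpace X] [MeasurableSpace Y] [MeasurableSpace Z]
    (Pi : Measure (X × Y × Z)) [IsProbabilityMeasure Pi]
    (PXgZ : Kernel Z X) [IsMarkovKernel PXgZ]
    (PYgXZ : Kernel (X × Z) Y) [IsMarkovKernel PYgXZ]
    (PZgXY : Kernel (X × Y) Z) [IsMarkovKernel PZgXY]
    (hXgZ : Pi.map (fun p : X × Y × Z => (p.2.2, p.1)) = (Pi.map fun p : X × Y × Z => p.2.2) ⊗ₘ PXgZ)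
    (hYgXZ : Pi.map (fun p : X × Y × Z => ((p.1, p.2.2), p.2.1)) = (Pi.map fun p : X × Y × Z => (p.1, p.2.2)) ⊗ₘ PYgXZ)
    (hZgXY : Pi.map (fun p : X × Y × Z => ((p.1, p.2.1), p.2.2)) = (Pi.map fun p : X × Y × Z => (p.1, p.2.1)) ⊗ₘ PZgXY)
    (PiStar : Measure (Y × Z × X))
    (hPiStar : PiStar = (Pi.map fun p : X × Y × Z => (p.2.1, p.2.2)).bind fun q =>
        (PXgZ q.2).map fun x => (q.1, q.2, x))
    :
    (Pi.map fun p : X × Y × Z => p.2.2) =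
      PiStar.bind fun p => (PYgXZ (p.2.2, p.2.1)).bind fun y' => PZgXY (p.2.2, y') := by
  let K : Kernel (X × Z) (X × Y) := (Kernel.id ×ₖ PYgXZ).map fun w => (w.1.1, w.2)
  calc (Pi.map fun p : X × Y × Z => p.2.2)
      = PZgXY ∘ₘ Pi.map fun p => (p.1, p.2.1) := by
        rw [← Measure.snd_compProd, ← hZgXY, Measure.snd,
          Measure.map_map measurable_snd (by fun_prop)]
        rfl
    _ = PZgXY ∘ₘ K ∘ₘ Pi.map fun p => (p.1, p.2.2) := by
        rw [Measure.comp_map_of_map_prodMk_eq_compProd Pi (by fun_prop) (by fun_prop) PYgXZ hYgXZ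
          (by fun_prop)]
    _ = (PZgXY ∘ₖ K) ∘ₘ PiStar.map fun p => (p.2.2, p.2.1) := by
        rw [Measure.comp_assoc, hPiStar, Measure.map_bind_map_prodMk_snd,
          Measure.map_map measurable_snd (by fun_prop)]
        congr 1
        exact (Measure.comp_map_of_map_prodMk_eq_compProd Pi (by fun_prop) (by fun_prop) PXgZ hXgZ
          measurable_swap).symm
    _ = _ := by
        rw [Measure.comp_map_eq_comp_comap _ _ (by fun_prop)]
        congr with p : 1
        rw [Kernel.comap_apply, Kernel.comp_map_id_prod_apply _ _ measurable_fst]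
end
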